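/- For every real t > 0, ∫_{Δ₂} (∂F₂/∂x)(x,q) dx dq = ∫₁² dx/(2(x+2t)^{3/2}(2−x)^{1/2}), where F₂(x,q) = x^{1/2}(x−1)^{1/2}/(4(x+2t)^{3/2} q^{3/4}(1−q)^{1/2}) and ∂F₂/∂x denotes the partial derivative of F₂ with respect to x; all fractional powers are the positive real ones. -/

import Mathlib

open MeasureTheory

/-- The region `Δ₂ = {(x,q) : 1 < x < 2, 0 < q ≤ ((2−x)/x)²}`. -/
def Delta2 : Set (ℝ × ℝ) :=
  {z | 1 < z.1 ∧ z.1 < 2 ∧ 0 < z.2 ∧ z.2 ≤ ((2 - z.1) / z.1) ^ 2}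

/-!
`F₂(x,q) = xPart t x / qPart q`, and `xPart t` is increasing on `[1,2]` with `xPart t 1 = 0`,
so every integrand is nonnegative and Tonelli applies with no integrability to check. The slice
of `Δ₂` at height `q ∈ (0,1)` is `1 < x ≤ boundaryInv q = 2/(1+√q)`, so integrating in `x` first
leaves `∫₀¹ xPart t (boundaryInv q) / qPart q dq`, and the substitution
`q = boundary x = ((2−x)/x)²` turns this into the right-hand side.
-/

open Set

theorem lintegral_ofReal_deriv_eq_ofReal_sub {g g' : ℝ → ℝ} {a b : ℝ} (hab : a ≤ b)
    (hcont : ContinuousOn g (Icc a b)) (hderiv : ∀ x ∈ Ioo a b, HasDerivAt g (g' x) x)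
    (hg' : ∀ x ∈ Ioo a b, 0 ≤ g' x) :
    ∫⁻ x in Ioc a b, ENNReal.ofReal (g' x) = ENNReal.ofReal (g b - g a) := by
  have hint := intervalIntegral.integrableOn_deriv_of_nonneg hcont hderiv hg'
  rw [← ofReal_integral_eq_lintegral_ofReal hint, ← intervalIntegral.integral_of_le hab,
    intervalIntegral.integral_eq_sub_of_hasDerivAt_of_le hab hcont hderiv
      ((intervalIntegrable_iff_integrableOn_Ioc_of_le hab).2 hint)]
  rw [Filter.EventuallyLE, Measure.restrict_congr_set Ioo_ae_eq_Ioc.symm]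
  exact ae_restrict_of_forall_mem measurableSet_Ioo hg'

theorem setLIntegral_prod_eq_lintegral_slices {α β : Type*} [MeasurableSpace α]
    [MeasurableSpace β] {μ : Measure α} {ν : Measure β} [SFinite μ] [SFinite ν] {s : Set β}
    {t : β → Set α} (hst : MeasurableSet {z : α × β | z.2 ∈ s ∧ z.1 ∈ t z.2})
    (hs : MeasurableSet s) (ht : ∀ y, MeasurableSet (t y)) {f : α × β → ENNReal}
    (hf : Measurable f) :
    ∫⁻ z in {z : α × β | z.2 ∈ s ∧ z.1 ∈ t z.2}, f z ∂μ.prod ν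
      = ∫⁻ y in s, ∫⁻ x in t y, f (x, y) ∂μ ∂ν := by
  rw [← lintegral_indicator hst, lintegral_prod_symm _ (hf.indicator hst).aemeasurable,
    ← lintegral_indicator hs]
  congr 1
  funext y
  by_cases hy : y ∈ s
  · rw [indicator_of_mem hy, ← lintegral_indicator (ht y)]
    congr 1
    funext x
    by_cases hx : x ∈ t y <;> simp [indicator, hx, hy]
  · simp [indicator, hy]

noncomputable def xPart (t x : ℝ) : ℝ :=
  x ^ ((1:ℝ)/2) * (x - 1) ^ ((1:ℝ)/2) / (4 * (x + 2 * t) ^ ((3:ℝ)/2))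

noncomputable def qPart (q : ℝ) : ℝ := q ^ ((3:ℝ)/4) * (1 - q) ^ ((1:ℝ)/2)

lemma deriv_F₂ (t q x : ℝ) :
    deriv (fun x : ℝ => x ^ ((1:ℝ)/2) * (x - 1) ^ ((1:ℝ)/2) /
      (4 * (x + 2 * t) ^ ((3:ℝ)/2) * q ^ ((3:ℝ)/4) * (1 - q) ^ ((1:ℝ)/2))) x
      = deriv (xPart t) x / qPart q := by
  rw [← deriv_div_const]
  simp only [xPart, qPart, div_div, mul_assoc]

lemma xPart_one (t : ℝ) : xPart t 1 = 0 := by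
  simp [xPart]

lemma continuousOn_xPart (t : ℝ) : ContinuousOn (xPart t) (Ioi (-(2 * t))) := by
  refine ContinuousOn.div (by fun_prop (disch := norm_num)) (by fun_prop (disch := norm_num))
    fun x hx => ?_
  have : 0 < x + 2 * t := by linarith [mem_Ioi.1 hx]
  positivity

lemma hasDerivAt_xPart {t x : ℝ} (hx : 1 < x) (hxt : 0 < x + 2 * t) :
    HasDerivAt (xPart t)
      (xPart t x * (1 / (2 * x) + 1 / (2 * (x - 1)) - 3 / (2 * (x + 2 * t)))) x := by
  have hx0 : 0 < x := by linarith
  have hx1 : 0 < x - 1 := by linarith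
  have h := ((Real.hasDerivAt_rpow_const (p := (1:ℝ)/2) (Or.inl hx0.ne')).mul
    (((hasDerivAt_id x).sub_const 1).rpow_const (p := (1:ℝ)/2) (Or.inl hx1.ne'))).div
    ((((hasDerivAt_id x).add_const (2 * t)).rpow_const (p := (3:ℝ)/2)
      (Or.inl hxt.ne')).const_mul 4) (by positivity)
  refine h.congr_deriv ?_
  simp only [id, Pi.mul_apply, Real.rpow_sub_one hx0.ne', Real.rpow_sub_one hx1.ne',
    Real.rpow_sub_one hxt.ne', xPart]
  field_simp

lemma deriv_xPart_nonneg {t x : ℝ} (ht : 0 ≤ t) (hx1 : 1 < x) (hx2 : x ≤ 2) :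
    0 ≤ deriv (xPart t) x := by
  have hx0 : 0 < x := by linarith
  have hx1' : 0 < x - 1 := by linarith
  have hxt : 0 < x + 2 * t := by linarith
  rw [(hasDerivAt_xPart hx1 hxt).deriv]
  refine mul_nonneg (by unfold xPart; positivity) (sub_nonneg.2 ?_)
  calc 3 / (2 * (x + 2 * t)) ≤ 3 / (2 * x) := by gcongr; linarith
    _ ≤ 1 / (2 * x) + 1 / (2 * (x - 1)) := by
      rw [div_add_div _ _ (by positivity) (by positivity),
        div_le_div_iff₀ (by positivity) (by positivity)]
      nlinarith

lemma qPart_pos {q : ℝ} (hq : q ∈ Ioo 0 1) : 0 < qPart q := by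
  have : 0 < 1 - q := by linarith [hq.2]
  have := hq.1
  unfold qPart
  positivity

noncomputable def boundary (x : ℝ) : ℝ := ((2 - x) / x) ^ 2

noncomputable def boundaryInv (q : ℝ) : ℝ := 2 / (1 + √q)

lemma boundary_mapsTo : MapsTo boundary (Ioo 1 2) (Ioo 0 1) := by
  rintro x ⟨hx1, hx2⟩
  have hu0 : 0 < (2 - x) / x := div_pos (by linarith) (by linarith)
  have hu1 : (2 - x) / x < 1 := by rw [div_lt_one (by linarith)]; linarith
  exact ⟨by unfold boundary; positivity, by unfold boundary; nlinarith⟩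

lemma boundaryInv_mapsTo : MapsTo boundaryInv (Ioo 0 1) (Ioo 1 2) := by
  rintro q ⟨hq0, hq1⟩
  have hs0 : 0 < √q := Real.sqrt_pos.2 hq0
  have hs1 : √q < 1 := (Real.sqrt_lt' one_pos).2 (by linarith)
  constructor
  · rw [boundaryInv, lt_div_iff₀ (by positivity)]; linarith
  · rw [boundaryInv, div_lt_iff₀ (by positivity)]; linarith

lemma boundaryInv_boundary {x : ℝ} (hx : x ∈ Ioo 1 2) : boundaryInv (boundary x) = x := by
  have hx0 : 0 < x := by linarith [hx.1]
  rw [boundaryInv, boundary, Real.sqrt_sq (div_pos (by linarith [hx.2]) hx0).le]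
  field_simp
  ring

lemma boundary_boundaryInv {q : ℝ} (hq : q ∈ Ioo 0 1) : boundary (boundaryInv q) = q := by
  have hs0 : 0 ≤ √q := Real.sqrt_nonneg q
  rw [boundary, boundaryInv,
    show (2 - 2 / (1 + √q)) / (2 / (1 + √q)) = √q by field_simp; ring, Real.sq_sqrt hq.1.le]

lemma boundary_bijOn : BijOn boundary (Ioo 1 2) (Ioo 0 1) :=
  InvOn.bijOn ⟨fun _ hx => boundaryInv_boundary hx, fun _ hq => boundary_boundaryInv hq⟩
    boundary_mapsTo boundaryInv_mapsTo

lemma hasDerivAt_boundary {x : ℝ} (hx : x ≠ 0) :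
    HasDerivAt boundary (-(4 * (2 - x) / x ^ 3)) x := by
  have h := (((hasDerivAt_id' x).const_sub 2).div (hasDerivAt_id' x) hx).pow 2
  refine h.congr_deriv ?_
  simp only [Pi.div_apply, Nat.cast_ofNat, Nat.add_one_sub_one, pow_one]
  field_simp
  ring

lemma le_boundary_iff {x q : ℝ} (hx : x ∈ Ioo 1 2) :
    q ≤ boundary x ↔ x ≤ boundaryInv q := by
  have hx0 : 0 < x := by linarith [hx.1]
  have hu : 0 ≤ (2 - x) / x := (div_pos (by linarith [hx.2]) hx0).le
  rw [boundary, ← Real.sqrt_le_left hu, le_div_iff₀ hx0, boundaryInv,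
    le_div_iff₀ (by positivity)]
  constructor <;> intro h <;> linarith

lemma Delta2_eq : Delta2 = {z | z.2 ∈ Ioo 0 1 ∧ z.1 ∈ Ioc 1 (boundaryInv z.2)} := by
  ext ⟨x, q⟩
  constructor
  · rintro ⟨hx1, hx2, hq0, hq⟩
    exact ⟨⟨hq0, hq.trans_lt (boundary_mapsTo ⟨hx1, hx2⟩).2⟩, hx1,
      (le_boundary_iff ⟨hx1, hx2⟩).1 hq⟩
  · rintro ⟨hq, hx1, hx⟩
    have hx2 : x < 2 := hx.trans_lt (boundaryInv_mapsTo hq).2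
    exact ⟨hx1, hx2, hq.1, (le_boundary_iff ⟨hx1, hx2⟩).2 hx⟩

lemma measurableSet_Delta2 : MeasurableSet Delta2 := by
  unfold Delta2
  measurability

lemma deriv_xPart_div_qPart_nonneg {t : ℝ} (ht : 0 ≤ t) {z : ℝ × ℝ} (hz : z ∈ Delta2) :
    0 ≤ deriv (xPart t) z.1 / qPart z.2 := by
  rw [Delta2_eq] at hz
  obtain ⟨hq, hx1, hx⟩ := hz
  exact div_nonneg (deriv_xPart_nonneg ht hx1 (hx.trans (boundaryInv_mapsTo hq).2.le))
    (qPart_pos hq).le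

lemma lintegral_slice_Delta2 {t q : ℝ} (ht : 0 ≤ t) (hq : q ∈ Ioo 0 1) :
    ∫⁻ x in Ioc 1 (boundaryInv q), ENNReal.ofReal (deriv (xPart t) x / qPart q)
      = ENNReal.ofReal (xPart t (boundaryInv q) / qPart q) := by
  obtain ⟨hb1, hb2⟩ := boundaryInv_mapsTo hq
  have hcont : ContinuousOn (xPart t) (Icc 1 (boundaryInv q)) :=
    (continuousOn_xPart t).mono fun x hx => show -(2 * t) < x by linarith [hx.1]
  rw [lintegral_ofReal_deriv_eq_ofReal_sub (g := fun x => xPart t x / qPart q) hb1.le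
    (hcont.div_const _)
    (fun x hx =>
      ((hasDerivAt_xPart hx.1 (by linarith [hx.1])).differentiableAt.hasDerivAt).div_const _)
    (fun x hx => div_nonneg (deriv_xPart_nonneg ht hx.1 (by linarith [hx.2])) (qPart_pos hq).le),
    xPart_one, zero_div, sub_zero]

lemma qPart_boundary {x : ℝ} (hx : x ∈ Ioo 1 2) :
    qPart (boundary x) = (√(2 - x) / √x) ^ 3 * (2 * √(x - 1) / x) := by
  have hx0 : 0 < x := by linarith [hx.1]
  have h2x : 0 < 2 - x := by linarith [hx.2]
  have hbd : boundary x = (√(2 - x) / √x) ^ 4 := by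
    rw [boundary, div_pow, div_pow, show 4 = 2 * 2 from rfl, pow_mul, pow_mul,
      Real.sq_sqrt h2x.le, Real.sq_sqrt hx0.le]
  have hsub : 1 - boundary x = (2 * √(x - 1) / x) ^ 2 := by
    rw [boundary, div_pow, div_pow, mul_pow, Real.sq_sqrt (by linarith [hx.1])]
    field_simp
    ring
  rw [qPart, hsub, ← Real.sqrt_eq_rpow, Real.sqrt_sq (by positivity), hbd,
    ← Real.rpow_natCast, ← Real.rpow_mul (by positivity)]
  norm_num

lemma abs_deriv_boundary_mul {t x : ℝ} (ht : 0 ≤ t) (hx : x ∈ Ioo 1 2) :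
    |-(4 * (2 - x) / x ^ 3)| * (xPart t x / qPart (boundary x))
      = 1 / (2 * (x + 2 * t) ^ ((3:ℝ)/2) * (2 - x) ^ ((1:ℝ)/2)) := by
  have hx0 : 0 < x := by linarith [hx.1]
  have hx1 : 0 < x - 1 := by linarith [hx.1]
  have h2x : 0 < 2 - x := by linarith [hx.2]
  have hP : 0 < (x + 2 * t) ^ ((3:ℝ)/2) := by
    have : 0 < x + 2 * t := by linarith
    positivity
  rw [qPart_boundary hx, xPart, abs_neg, abs_of_pos (by positivity)]
  simp only [← Real.sqrt_eq_rpow]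
  generalize (x + 2 * t) ^ ((3:ℝ)/2) = P at *
  have ha := Real.sq_sqrt hx0.le
  have hc := Real.sq_sqrt h2x.le
  have : 0 < √x := Real.sqrt_pos.2 hx0
  have : 0 < √(x-1) := Real.sqrt_pos.2 hx1
  have : 0 < √(2-x) := Real.sqrt_pos.2 h2x
  field_simp
  rw [hc, show √x ^ 4 = (√x ^ 2) ^ 2 by ring, ha]
  ring

/-- For `t > 0`, `∫_{Δ₂} ∂F₂/∂x dx dq = ∫₁² dx/(2(x+2t)^{3/2}(2−x)^{1/2})` where
`F₂(x,q) = x^{1/2}(x−1)^{1/2}/(4(x+2t)^{3/2}q^{3/4}(1−q)^{1/2})`. -/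
theorem stmt14 (t : ℝ) (ht : 0 < t) :
    (∫ z in Delta2, deriv (fun x : ℝ =>
        x ^ ((1:ℝ)/2) * (x - 1) ^ ((1:ℝ)/2) /
          (4 * (x + 2 * t) ^ ((3:ℝ)/2) * z.2 ^ ((3:ℝ)/4) * (1 - z.2) ^ ((1:ℝ)/2))) z.1)
    = ∫ x in Set.Ioo (1:ℝ) 2, 1 / (2 * (x + 2 * t) ^ ((3:ℝ)/2) * (2 - x) ^ ((1:ℝ)/2)) := by
  have hrhs : ∀ x ∈ Ioo (1:ℝ) 2,
      0 ≤ 1 / (2 * (x + 2 * t) ^ ((3:ℝ)/2) * (2 - x) ^ ((1:ℝ)/2)) := fun x hx => by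
    have : 0 < 2 - x := by linarith [hx.2]
    have : 0 < x + 2 * t := by linarith [hx.1]
    positivity
  have hmeas : Measurable fun z : ℝ × ℝ => deriv (xPart t) z.1 / qPart z.2 := by
    unfold qPart; fun_prop
  simp only [deriv_F₂]
  rw [integral_eq_lintegral_of_nonneg_ae (ae_restrict_of_forall_mem measurableSet_Delta2
      fun _ hz => deriv_xPart_div_qPart_nonneg ht.le hz) hmeas.aestronglyMeasurable,
    integral_eq_lintegral_of_nonneg_ae (ae_restrict_of_forall_mem measurableSet_Ioo hrhs)
      (Measurable.aestronglyMeasurable (by fun_prop))]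
  congr 1
  rw [Measure.volume_eq_prod, Delta2_eq, setLIntegral_prod_eq_lintegral_slices
      (Delta2_eq ▸ measurableSet_Delta2) measurableSet_Ioo (fun _ => measurableSet_Ioc)
      hmeas.ennreal_ofReal,
    setLIntegral_congr_fun measurableSet_Ioo fun q hq => lintegral_slice_Delta2 ht.le hq,
    ← boundary_bijOn.image_eq, lintegral_image_eq_lintegral_abs_deriv_mul measurableSet_Ioo
      (fun x hx => (hasDerivAt_boundary (by linarith [hx.1])).hasDerivWithinAt)
      boundary_bijOn.injOn]
  refine setLIntegral_congr_fun measurableSet_Ioo fun x hx => ?_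
  rw [← ENNReal.ofReal_mul (abs_nonneg _), boundaryInv_boundary hx,
    abs_deriv_boundary_mul ht.le hx]
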